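/- arXiv:1708.08222 — 7 statements merged into one kernel-verified Lean document; each statement's English description precedes it below -/
import Mathlib

section
/- If (F, δ) : C → D is a G-equivariant functor between categories equipped with G-actions and the underlying functor F is an equivalence of categories, then the induced functor (F, δ)^G : C^G → D^G on categories of G-equivariant objects is also an equivalence of categories. -/
open CategoryTheory

universe v u v₂ u₂

structure GrpAction (G : Type*) [Group G] (C : Type u) [Category.{v} C] where
  F : G → C ⥤ C
  isEquiv : ∀ g : G, (F g).IsEquivalence
  ε : ∀ g h : G, F h ⋙ F g ≅ F (g * h)
  cocycle : ∀ (g h k : G) (X : C),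
    (ε g h).hom.app ((F k).obj X) ≫ (ε (g * h) k).hom.app X ≫
        eqToHom (by rw [mul_assoc]) =
      (F g).map ((ε h k).hom.app X) ≫ (ε g (h * k)).hom.app X

variable {G : Type*} [Group G] {C : Type u} [Category.{v} C] {D : Type u₂} [Category.{v₂} D]

structure EqvObj (A : GrpAction G C) where
  pt : C
  α : ∀ g : G, pt ≅ (A.F g).obj pt
  compat : ∀ g h : G, (α (g * h)).hom =
    (α g).hom ≫ (A.F g).map ((α h).hom) ≫ (A.ε g h).hom.app pt

instance (A : GrpAction G C) : Category (EqvObj A) where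
  Hom M N := { f : M.pt ⟶ N.pt // ∀ g : G,
    f ≫ (N.α g).hom = (M.α g).hom ≫ (A.F g).map f }
  id M := ⟨𝟙 M.pt, by intro g; simp⟩
  comp {M N P} f g := ⟨f.1 ≫ g.1, by
    intro h
    rw [Category.assoc, g.2, ← Category.assoc, f.2, Category.assoc, ← Functor.map_comp]⟩
  id_comp f := Subtype.ext (Category.id_comp f.1)
  comp_id f := Subtype.ext (Category.comp_id f.1)
  assoc f g h := Subtype.ext (Category.assoc f.1 g.1 h.1)

/-- A `G`-equivariant functor between categories with `G`-actions. -/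
structure EqvFunctor (A : GrpAction G C) (B : GrpAction G D) where
  F : C ⥤ D
  δ : ∀ g : G, A.F g ⋙ F ≅ F ⋙ B.F g
  compat : ∀ (g h : G) (X : C),
    F.map ((A.ε g h).hom.app X) ≫ (δ (g * h)).hom.app X =
      (δ g).hom.app ((A.F h).obj X) ≫ (B.F g).map ((δ h).hom.app X) ≫
        (B.ε g h).hom.app (F.obj X)

/-- The functor `(F, δ)^G` between categories of equivariant objects induced by a
`G`-equivariant functor. -/
def inducedFunctor {A : GrpAction G C} {B : GrpAction G D} (E : EqvFunctor A B) :
    EqvObj A ⥤ EqvObj B where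
  obj M :=
  { pt := E.F.obj M.pt
    α := fun g => E.F.mapIso (M.α g) ≪≫ (E.δ g).app M.pt
    compat := by
      intro g h
      simp only [Iso.trans_hom, Functor.mapIso_hom, Iso.app_hom]
      rw [M.compat g h]
      simp only [Functor.map_comp, Category.assoc]
      rw [E.compat g h M.pt]
      have nat := (E.δ g).hom.naturality (M.α h).hom
      simp only [Functor.comp_map] at nat
      rw [← Category.assoc ((E.δ g).hom.app M.pt), ← nat]
      simp [Category.assoc] }
  map {M N} f := ⟨E.F.map f.1, by
    intro g
    simp only [Iso.trans_hom, Functor.mapIso_hom, Iso.app_hom]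
    rw [← Category.assoc, ← E.F.map_comp, f.2, E.F.map_comp, Category.assoc]
    have nat := (E.δ g).hom.naturality f.1
    simp only [Functor.comp_map] at nat
    rw [nat, ← Category.assoc]⟩
  map_id M := Subtype.ext (E.F.map_id M.pt)
  map_comp f g := Subtype.ext (E.F.map_comp f.1 g.1)

/-!
Faithfulness, fullness and essential surjectivity each lift from `F` to `(F, δ)^G`.
By the compatibility of `δ` with `ε` and `ε'`, the image under `F` of the cocycle
`ε_{g,h} ∘ F_g(α_h) ∘ α_g`, followed by `δ_{gh}`, is the cocycle of `α̃`. As `F` is faithful and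
`δ_{gh}` invertible, a family `α` on `X` is equivariant exactly when `α̃` is, and likewise for
morphisms. For essential surjectivity, transport the structure of `(Y, β)` along `F(X) ≅ Y`;
since `F` is full it is `α̃` for some family `α` on `X`, which is therefore equivariant.
-/

namespace EqvObj

variable {A : GrpAction G C}

lemma hom_ext {M N : EqvObj A} {f f' : M ⟶ N} (h : f.1 = f'.1) : f = f' :=
  Subtype.ext h

def isoMk {M N : EqvObj A} (e : M.pt ≅ N.pt)
    (he : ∀ g, e.hom ≫ (N.α g).hom = (M.α g).hom ≫ (A.F g).map e.hom) : M ≅ N where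
  hom := ⟨e.hom, he⟩
  inv := ⟨e.inv, fun g => by
    rw [← cancel_epi e.hom, e.hom_inv_id_assoc, reassoc_of% (he g), ← Functor.map_comp,
      e.hom_inv_id, CategoryTheory.Functor.map_id, Category.comp_id]⟩
  hom_inv_id := hom_ext e.hom_inv_id
  inv_hom_id := hom_ext e.inv_hom_id

@[simps]
def transport (N : EqvObj A) {Z : C} (η : Z ≅ N.pt) : EqvObj A where
  pt := Z
  α g := η ≪≫ N.α g ≪≫ (A.F g).mapIso η.symm
  compat g h := by
    have hε := (A.ε g h).hom.naturality η.inv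
    simp only [Functor.comp_map] at hε
    simp [N.compat g h, hε]

end EqvObj

namespace EqvFunctor

variable {A : GrpAction G C} {B : GrpAction G D} (E : EqvFunctor A B)

def mapα {X : C} (α : ∀ g : G, X ≅ (A.F g).obj X) (g : G) :
    E.F.obj X ≅ (B.F g).obj (E.F.obj X) :=
  E.F.mapIso (α g) ≪≫ (E.δ g).app X

lemma map_cocycle_comp_δ {X : C} (α : ∀ g : G, X ≅ (A.F g).obj X) (g h : G) :
    E.F.map ((α g).hom ≫ (A.F g).map (α h).hom ≫ (A.ε g h).hom.app X) ≫
        (E.δ (g * h)).hom.app X =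
      (E.mapα α g).hom ≫ (B.F g).map (E.mapα α h).hom ≫ (B.ε g h).hom.app (E.F.obj X) := by
  have hδ := (E.δ g).hom.naturality (α h).hom
  simp only [Functor.comp_map] at hδ
  simp only [mapα, Iso.trans_hom, Functor.mapIso_hom, Iso.app_hom, Functor.map_comp,
    Category.assoc, E.compat g h X, reassoc_of% hδ]

lemma mapα_compat_iff [E.F.Faithful] {X : C} (α : ∀ g : G, X ≅ (A.F g).obj X) (g h : G) :
    (E.mapα α (g * h)).hom =
        (E.mapα α g).hom ≫ (B.F g).map (E.mapα α h).hom ≫ (B.ε g h).hom.app (E.F.obj X) ↔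
      (α (g * h)).hom = (α g).hom ≫ (A.F g).map (α h).hom ≫ (A.ε g h).hom.app X := by
  rw [← map_cocycle_comp_δ, mapα, Iso.trans_hom, Iso.app_hom, cancel_mono, Functor.mapIso_hom,
    E.F.map_injective.eq_iff]

lemma map_equivariant_iff [E.F.Faithful] {X X' : C} (α : ∀ g : G, X ≅ (A.F g).obj X)
    (α' : ∀ g : G, X' ≅ (A.F g).obj X') (f : X ⟶ X') (g : G) :
    E.F.map f ≫ (E.mapα α' g).hom = (E.mapα α g).hom ≫ (B.F g).map (E.F.map f) ↔
      f ≫ (α' g).hom = (α g).hom ≫ (A.F g).map f := by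
  have hδ := (E.δ g).hom.naturality f
  simp only [Functor.comp_map] at hδ
  simp only [mapα, Iso.trans_hom, Functor.mapIso_hom, Iso.app_hom, Category.assoc, ← hδ]
  rw [← Functor.map_comp_assoc, ← Functor.map_comp_assoc, cancel_mono, E.F.map_injective.eq_iff]

section lift

variable [E.F.Full] [E.F.Faithful] (N : EqvObj B) (X : C) (η : E.F.obj X ≅ N.pt)

noncomputable def liftα (g : G) : X ≅ (A.F g).obj X :=
  E.F.preimageIso (η ≪≫ N.α g ≪≫ (B.F g).mapIso η.symm ≪≫ ((E.δ g).app X).symm)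

lemma mapα_liftα : E.mapα (E.liftα N X η) = (N.transport η).α := by
  funext g
  ext
  simp [mapα, liftα]

noncomputable def liftObj : EqvObj A where
  pt := X
  α := E.liftα N X η
  compat g h :=
    (E.mapα_compat_iff _ g h).1 (by rw [mapα_liftα]; exact (N.transport η).compat g h)

noncomputable def inducedFunctorObjLiftObjIso : (inducedFunctor E).obj (E.liftObj N X η) ≅ N :=
  EqvObj.isoMk η fun g => by
    change η.hom ≫ (N.α g).hom = (E.mapα (E.liftα N X η) g).hom ≫ (B.F g).map η.hom
    simp [mapα_liftα]

end lift

instance faithful_inducedFunctor [E.F.Faithful] : (inducedFunctor E).Faithful where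
  map_injective h := EqvObj.hom_ext (E.F.map_injective (congrArg Subtype.val h))

instance full_inducedFunctor [E.F.Full] [E.F.Faithful] : (inducedFunctor E).Full where
  map_surjective {M N} f := by
    obtain ⟨f, hf⟩ := f
    change E.F.obj M.pt ⟶ E.F.obj N.pt at f
    refine ⟨⟨E.F.preimage f, fun g => ?_⟩, EqvObj.hom_ext (E.F.map_preimage f)⟩
    rw [← E.map_equivariant_iff, E.F.map_preimage]
    exact hf g

instance essSurj_inducedFunctor [E.F.Full] [E.F.Faithful] [E.F.EssSurj] :
    (inducedFunctor E).EssSurj where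
  mem_essImage N :=
    ⟨_, ⟨E.inducedFunctorObjLiftObjIso N _ (E.F.objObjPreimageIso N.pt)⟩⟩

end EqvFunctor

/-- If `(F, δ) : C → D` is a `G`-equivariant functor between categories with
`G`-actions and the underlying functor `F` is an equivalence of categories, then the induced
functor `(F, δ)^G : C^G → D^G` on categories of `G`-equivariant objects is also an
equivalence of categories. -/
theorem inducedFunctor_isEquivalence {G : Type*} [Group G] {C : Type u} [Category.{v} C]
    {D : Type u₂} [Category.{v₂} D] {A : GrpAction G C} {B : GrpAction G D}
    (E : EqvFunctor A B) (hE : E.F.IsEquivalence) :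
    (inducedFunctor E).IsEquivalence :=
  { }
end

section
/- Let F : C → C be an autoequivalence with a natural isomorphism c : F^d ≅ Id_C satisfying F ◁ c = c ▷ F. Then setting F̄_{g^i} = F^i (with F^0 = Id_C) and ε̄_{g^i,g^j} equal to the identity if i+j < d and to F^{i+j−d} ◁ c if i+j ≥ d defines a C_d-action on C, where C_d = ⟨g⟩ is the cyclic group of order d. -/
/-!
Let `cIter c X n q : F^(n + d q) X ⟶ F^n X` be `q` successive applications of `c`, and call a
morphism a `c`-iterate from `F^m X` to `F^n X` if it is `cIter` up to the canonical
identifications `F^a F^b = F^(a+b)`. Every component of `ε̄` is such an iterate. Iterates are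
closed under composition and under applying `F^a`, and, thanks to `F ◁ c = c ▷ F`, an iterate
based at `F^b X` is also one based at `X`. Since `d ≠ 0`, there is at most one iterate from
`F^m X` to `F^n X` (the number of copies of `c` is `(m - n) / d`), so both sides of the cocycle
identity, being iterates from `F^(i+j+k) X` to `F^((i+j+k) mod d) X`, agree.
-/

open CategoryTheory

universe v u

variable {C : Type u} [Category.{v} C]

/-- Iterated composition `F^n` of an endofunctor (with `F` applied innermost first). -/
def fpow (F : C ⥤ C) : ℕ → C ⥤ C
  | 0 => 𝟭 C
  | n + 1 => F ⋙ fpow F n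

lemma fpow_comp (F : C ⥤ C) (i j : ℕ) : fpow F j ⋙ fpow F i = fpow F (i + j) := by
  induction j with
  | zero => exact Functor.id_comp _
  | succ j ih =>
    show (F ⋙ fpow F j) ⋙ fpow F i = fpow F (i + (j + 1))
    rw [Functor.assoc, ih]
    rfl

lemma fpow_obj_comm (F : C ⥤ C) (n : ℕ) (X : C) :
    F.obj ((fpow F n).obj X) = (fpow F n).obj (F.obj X) := by
  induction n generalizing X with
  | zero => rfl
  | succ n ih => exact ih (F.obj X)

/-- A *compatible pair of order `d`*: an endofunctor `F` with a natural isomorphism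
`c : F^d ≅ 𝟭 C` satisfying `F ◁ c = c ▷ F` (componentwise). -/
def IsCompatiblePair (d : ℕ) (F : C ⥤ C) (c : fpow F d ≅ 𝟭 C) : Prop :=
  ∀ X : C, F.map (c.hom.app X) = eqToHom (fpow_obj_comm F d X) ≫ c.hom.app (F.obj X)

/-- The structural isomorphisms of the `C_d`-action induced by a compatible pair `(F, c)`
of order `d`: the identity when `i + j < d`, and `F^{i+j-d} ◁ c` otherwise. -/
noncomputable def inducedEps (d : ℕ) [NeZero d] (F : C ⥤ C) (c : fpow F d ≅ 𝟭 C)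
    (x y : Multiplicative (ZMod d)) :
    fpow F (ZMod.val (Multiplicative.toAdd y)) ⋙ fpow F (ZMod.val (Multiplicative.toAdd x)) ≅
      fpow F (ZMod.val (Multiplicative.toAdd (x * y))) :=
  if h : ZMod.val (Multiplicative.toAdd x) + ZMod.val (Multiplicative.toAdd y) < d then
    eqToIso (by
      rw [fpow_comp]
      congr 1
      rw [toAdd_mul, ZMod.val_add, Nat.mod_eq_of_lt h])
  else
    eqToIso (by
      rw [fpow_comp, fpow_comp]
      congr 1
      have hx := ZMod.val_lt (Multiplicative.toAdd x)
      have hy := ZMod.val_lt (Multiplicative.toAdd y)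
      omega) ≪≫
    Functor.isoWhiskerRight c
      (fpow F (ZMod.val (Multiplicative.toAdd x) + ZMod.val (Multiplicative.toAdd y) - d)) ≪≫
    eqToIso (by
      rw [Functor.id_comp]
      congr 1
      have hx := ZMod.val_lt (Multiplicative.toAdd x)
      have hy := ZMod.val_lt (Multiplicative.toAdd y)
      rw [toAdd_mul, ZMod.val_add,
        Nat.mod_eq_sub_mod (by omega), Nat.mod_eq_of_lt (by omega)])

lemma fpow_obj_add (F : C ⥤ C) (a b : ℕ) (X : C) :
    (fpow F a).obj ((fpow F b).obj X) = (fpow F (a + b)).obj X :=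
  Functor.congr_obj (fpow_comp F a b) X

lemma fpow_map_fpow_map (F : C ⥤ C) (a b : ℕ) {X Y : C} (f : X ⟶ Y) :
    (fpow F a).map ((fpow F b).map f) =
      eqToHom (fpow_obj_add F a b X) ≫ (fpow F (a + b)).map f ≫
        eqToHom (fpow_obj_add F a b Y).symm :=
  Functor.congr_hom (fpow_comp F a b) f

section

variable {F : C ⥤ C}

lemma fpow_map_congr {a b : ℕ} (h : a = b) {X Y : C} (f : X ⟶ Y) :
    (fpow F a).map f = eqToHom (by rw [h]) ≫ (fpow F b).map f ≫ eqToHom (by rw [h]) := by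
  subst h
  simp

lemma fpow_isEquivalence (hF : F.IsEquivalence) (n : ℕ) : (fpow F n).IsEquivalence := by
  induction n with
  | zero => exact inferInstanceAs (𝟭 C).IsEquivalence
  | succ n ih => exact inferInstanceAs (F ⋙ fpow F n).IsEquivalence

end

section

variable {d : ℕ} {F : C ⥤ C} (c : fpow F d ≅ 𝟭 C)

def cIter (X : C) (n : ℕ) : ∀ q : ℕ, (fpow F (n + d * q)).obj X ⟶ (fpow F n).obj X
  | 0 => 𝟙 _
  | q + 1 => eqToHom (by rw [fpow_obj_add, mul_add_one, add_assoc]) ≫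
      (fpow F (n + d * q)).map (c.hom.app X) ≫ cIter X n q

lemma cIter_comp_cIter (X : C) (l p q : ℕ) :
    cIter c X (l + d * p) q ≫ cIter c X l p =
      eqToHom (by rw [add_assoc, ← mul_add]) ≫ cIter c X l (p + q) := by
  induction q with
  | zero => simp [cIter]
  | succ q ih =>
    rw [cIter, Category.assoc, Category.assoc, ih,
      fpow_map_congr (by ring : l + d * p + d * q = l + d * (p + q))]
    simp [cIter]

def IsCIter (X : C) (m n : ℕ) {A B : C} (f : A ⟶ B) : Prop :=
  ∃ q, m = n + d * q ∧ ∃ (hA : A = (fpow F (n + d * q)).obj X) (hB : B = (fpow F n).obj X),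
    f = eqToHom hA ≫ cIter c X n q ≫ eqToHom hB.symm

variable {c}

lemma IsCompatiblePair.app_fpow_obj (hc : IsCompatiblePair d F c) (m : ℕ) (X : C) :
    c.hom.app ((fpow F m).obj X) =
      eqToHom (by rw [fpow_obj_add, fpow_obj_add, add_comm]) ≫ (fpow F m).map (c.hom.app X) := by
  induction m generalizing X with
  | zero => exact (Category.id_comp _).symm
  | succ m ih =>
    change c.hom.app ((fpow F m).obj (F.obj X)) = _ ≫ (fpow F m).map (F.map (c.hom.app X))
    rw [ih, hc X, Functor.map_comp, eqToHom_map]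
    exact (eqToHom_trans_assoc _ _ _).symm

lemma isCIter_eqToHom {X : C} {m n : ℕ} {A B : C} (h : A = B) (hA : A = (fpow F m).obj X)
    (hmn : m = n) : IsCIter c X m n (eqToHom h) := by
  subst hmn
  exact ⟨0, rfl, hA, h.symm.trans hA, by simp [cIter]⟩

lemma IsCIter.comp {X : C} {m n l : ℕ} {A B D : C} {f : A ⟶ B} {g : B ⟶ D}
    (hf : IsCIter c X m n f) (hg : IsCIter c X n l g) : IsCIter c X m l (f ≫ g) := by
  obtain ⟨q, rfl, hA, -, rfl⟩ := hf
  obtain ⟨p, rfl, -, hD, rfl⟩ := hg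
  refine ⟨p + q, by ring, hA.trans (by rw [add_assoc, ← mul_add]), hD, ?_⟩
  simp [reassoc_of% cIter_comp_cIter c X l p q]

lemma IsCIter.eq [NeZero d] {X : C} {m m' n : ℕ} {A B : C} {f g : A ⟶ B}
    (hf : IsCIter c X m n f) (hg : IsCIter c X m' n g) (hm : m = m') : f = g := by
  obtain ⟨q, rfl, hA, hB, rfl⟩ := hf
  obtain ⟨p, hp, -, -, rfl⟩ := hg
  obtain rfl : q = p := Nat.eq_of_mul_eq_mul_left (Nat.pos_of_neZero d) (by omega)
  rfl

lemma isCIter_fpow_map_app (X : C) (a : ℕ) :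
    IsCIter c X (a + d) a ((fpow F a).map (c.hom.app X)) :=
  ⟨1, by rw [mul_one], by rw [mul_one, fpow_obj_add], rfl, by simp [cIter]⟩

lemma isCIter_fpow_map_fpow_map_app (X : C) (a b : ℕ) :
    IsCIter c X (a + b + d) (a + b) ((fpow F a).map ((fpow F b).map (c.hom.app X))) := by
  rw [fpow_map_fpow_map]
  exact (isCIter_eqToHom (m := a + b + d) _ (by rw [fpow_obj_add, fpow_obj_add]) rfl).comp
    ((isCIter_fpow_map_app X _).comp (isCIter_eqToHom _ rfl rfl))

lemma isCIter_fpow_map_cIter (X : C) (a n q : ℕ) :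
    IsCIter c X (a + (n + d * q)) (a + n) ((fpow F a).map (cIter c X n q)) := by
  induction q with
  | zero =>
    simpa [cIter] using isCIter_eqToHom (c := c) (rfl : (fpow F a).obj ((fpow F n).obj X) = _)
      (fpow_obj_add F a n X) rfl
  | succ q ih =>
    rw [cIter, Functor.map_comp, Functor.map_comp, eqToHom_map]
    exact (isCIter_eqToHom _ (by rw [fpow_obj_add]) (by ring)).comp
      ((isCIter_fpow_map_fpow_map_app X a _).comp ih)

lemma IsCIter.fpow_map {X : C} {m n : ℕ} {A B : C} {f : A ⟶ B} (a : ℕ)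
    (hf : IsCIter c X m n f) : IsCIter c X (a + m) (a + n) ((fpow F a).map f) := by
  obtain ⟨q, rfl, hA, hB, rfl⟩ := hf
  rw [Functor.map_comp, Functor.map_comp, eqToHom_map, eqToHom_map]
  exact (isCIter_eqToHom _ (by rw [hA, fpow_obj_add]) rfl).comp
    ((isCIter_fpow_map_cIter X a n q).comp (isCIter_eqToHom _ (by rw [fpow_obj_add]) rfl))

lemma isCIter_cIter_fpow_obj (hc : IsCompatiblePair d F c) (X : C) (b n q : ℕ) :
    IsCIter c X (n + d * q + b) (n + b) (cIter c ((fpow F b).obj X) n q) := by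
  induction q with
  | zero => exact isCIter_eqToHom (c := c) rfl (fpow_obj_add F n b X) rfl
  | succ q ih =>
    rw [cIter, hc.app_fpow_obj, Functor.map_comp, eqToHom_map, Category.assoc]
    exact (isCIter_eqToHom _ (fpow_obj_add F _ b X) (by ring)).comp
      ((isCIter_eqToHom (m := n + d * q + d + b) _ (by rw [fpow_obj_add, fpow_obj_add])
        (by ring)).comp ((isCIter_fpow_map_fpow_map_app X _ b).comp ih))

lemma IsCIter.of_fpow_obj (hc : IsCompatiblePair d F c) {X : C} {m n b : ℕ} {A B : C}
    {f : A ⟶ B} (hf : IsCIter c ((fpow F b).obj X) m n f) : IsCIter c X (m + b) (n + b) f := by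
  obtain ⟨q, rfl, hA, hB, rfl⟩ := hf
  exact (isCIter_eqToHom _ (by rw [hA, fpow_obj_add]) rfl).comp
    ((isCIter_cIter_fpow_obj hc X b n q).comp (isCIter_eqToHom _ (by rw [fpow_obj_add]) rfl))

lemma isCIter_inducedEps [NeZero d] (x y : Multiplicative (ZMod d)) (Y : C) :
    IsCIter c Y ((Multiplicative.toAdd x).val + (Multiplicative.toAdd y).val)
      (Multiplicative.toAdd (x * y)).val ((inducedEps d F c x y).hom.app Y) := by
  have hx := ZMod.val_lt (Multiplicative.toAdd x)
  have hy := ZMod.val_lt (Multiplicative.toAdd y)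
  have hxy : (Multiplicative.toAdd (x * y)).val =
      ((Multiplicative.toAdd x).val + (Multiplicative.toAdd y).val) % d := by
    rw [toAdd_mul, ZMod.val_add]
  unfold inducedEps
  split_ifs with h
  · simp only [eqToIso.hom, eqToHom_app]
    exact isCIter_eqToHom _ (fpow_obj_add F _ _ Y) (by rw [hxy, Nat.mod_eq_of_lt h])
  · simp only [Iso.trans_hom, NatTrans.comp_app, eqToIso.hom, eqToHom_app,
      Functor.isoWhiskerRight_hom, Functor.whiskerRight_app]
    exact (isCIter_eqToHom _ (fpow_obj_add F _ _ Y) (by omega)).comp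
      ((isCIter_fpow_map_app Y _).comp (isCIter_eqToHom _ rfl
        (by rw [hxy, Nat.mod_eq_sub_mod (by omega), Nat.mod_eq_of_lt (by omega)])))

end

/-- Let `F : C ⥤ C` be an autoequivalence with a natural isomorphism
`c : F^d ≅ 𝟭 C` satisfying `F ◁ c = c ▷ F`.  Then `F̄_{gⁱ} = Fⁱ` together with the
isomorphisms `ε̄` (the identity if `i + j < d`, and `F^{i+j-d} ◁ c` otherwise, packaged in
`inducedEps`) defines a `C_d`-action on `C`: each `F̄_{gⁱ}` is an autoequivalence, and the
2-cocycle condition holds. -/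
theorem inducedEps_is_action (d : ℕ) [NeZero d] (F : C ⥤ C)
    (hF : F.IsEquivalence) (c : fpow F d ≅ 𝟭 C) (hc : IsCompatiblePair d F c) :
    (∀ x : Multiplicative (ZMod d),
      (fpow F (ZMod.val (Multiplicative.toAdd x))).IsEquivalence) ∧
    (∀ (x y z : Multiplicative (ZMod d)) (X : C),
      (inducedEps d F c x y).hom.app
          ((fpow F (ZMod.val (Multiplicative.toAdd z))).obj X) ≫
        (inducedEps d F c (x * y) z).hom.app X ≫ eqToHom (by rw [mul_assoc]) =
      (fpow F (ZMod.val (Multiplicative.toAdd x))).map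
          ((inducedEps d F c y z).hom.app X) ≫
        (inducedEps d F c x (y * z)).hom.app X) := by
  refine ⟨fun x => fpow_isEquivalence hF _, fun x y z X => ?_⟩
  have lhs := ((isCIter_inducedEps x y ((fpow F (Multiplicative.toAdd z).val).obj X)).of_fpow_obj
    hc).comp (isCIter_inducedEps (x * y) z X)
  have rhs := ((isCIter_inducedEps (c := c) y z X).fpow_map _).comp
    (isCIter_inducedEps x (y * z) X)
  rw [← Category.assoc]
  exact (lhs.comp (isCIter_eqToHom _ rfl (by rw [mul_assoc]))).eq rhs (add_assoc _ _ _)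
end

section
/- Every C_d-action on a category C is isomorphic to the C_d-action induced by a compatible pair: namely, if {F_{g^i}, ε_{g^i,g^j}} is a C_d-action with F = F_g, then the natural isomorphism c = u ∘ ε^{(d)} : F^d ≅ Id_C (where ε^{(d)} : F^d ≅ F_{g^d} = F_e is the iterated composite of the ε's and u the unit) satisfies F c = c F, and the given action is isomorphic to the action induced by the pair (F, c). -/
open CategoryTheory

universe v u v₂ u₂

variable {C : Type u} [Category.{v} C]

variable {G : Type*} [Group G]

/-- The iterated isomorphisms `ε^{(i)} : Fⁱ ≅ F_{gⁱ}` attached to a `G`-action and a chosen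
element `g`, defined by `ε^{(0)} = u⁻¹`, `ε^{(i+1)} = ε_{gⁱ, g} ∘ (ε^{(i)} ▷ F_g)`. -/
noncomputable def epsIter (A : GrpAction G C) (g : G) (u : A.F 1 ≅ 𝟭 C) :
    ∀ i : ℕ, fpow (A.F g) i ≅ A.F (g ^ i)
  | 0 => u.symm ≪≫ eqToIso (by rw [pow_zero])
  | i + 1 =>
    Functor.isoWhiskerLeft (A.F g) (epsIter A g u i) ≪≫ A.ε (g ^ i) g ≪≫ eqToIso (by rw [pow_succ])

lemma gen_pow_card (d : ℕ) [NeZero d] : (Multiplicative.ofAdd (1 : ZMod d)) ^ d = 1 := by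
  rw [← ofAdd_nsmul, nsmul_eq_mul, mul_one, ZMod.natCast_self, ofAdd_zero]

/-- The natural isomorphism `c = u ∘ ε^{(d)} : F^d ≅ 𝟭 C` attached to a `C_d`-action,
where `F = F_g` for the generator `g` of `C_d`. -/
noncomputable def cyclicC (d : ℕ) [NeZero d] (A : GrpAction (Multiplicative (ZMod d)) C)
    (u : A.F 1 ≅ 𝟭 C) : fpow (A.F (Multiplicative.ofAdd (1 : ZMod d))) d ≅ 𝟭 C :=
  epsIter A (Multiplicative.ofAdd (1 : ZMod d)) u d ≪≫
    eqToIso (by rw [gen_pow_card]) ≪≫ u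

/-! The isomorphisms `ε^{(n)} : Fⁿ ≅ F_{gⁿ}` are multiplicative: the cocycle condition, together
with the unit laws `ε_{1,a} = u F_a` and `ε_{a,1} = F_a u` that follow from the normalization
`ε_{1,1} = F_1 u`, gives `ε^{(i+j)} = ε_{gⁱ,gʲ} ∘ (ε^{(i)} ε^{(j)})` by induction on `j`. When
`gᵈ = 1` this specializes to `ε^{(k+d)} = ε^{(k)} ∘ Fᵏ c` with `c = u ∘ ε^{(d)}`. For `k = 1`,
compared with the recursive step `ε^{(d+1)} = ε_{1,g} ∘ (ε^{(d)} F) = c F`, it gives `F c = c F`;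
for `k = i + j - d` it shows that `δ_x = ε^{(val x)}` carries the structure isomorphisms of the
action induced by `(F, c)` to the `ε_{x,y}`. -/

namespace GrpAction

variable (A : GrpAction G C) (u : A.F 1 ≅ 𝟭 C)

def IsNormalizedUnit : Prop :=
  ∀ X : C, (A.ε 1 1).hom.app X ≫ eqToHom (by rw [mul_one]; rfl) = (A.F 1).map (u.hom.app X)

variable {A}

lemma ε_hom_app_congr {a a' b b' : G} (ha : a = a') (hb : b = b') (X : C) :
    (A.ε a b).hom.app X =
      eqToHom (by rw [ha, hb]) ≫ (A.ε a' b').hom.app X ≫ eqToHom (by rw [ha, hb]) := by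
  subst ha hb
  simp

variable {u}

lemma ε_one_one_hom_app (hu : A.IsNormalizedUnit u) (X : C) :
    (A.ε 1 1).hom.app X = (A.F 1).map (u.hom.app X) ≫ eqToHom (by rw [mul_one]; rfl) := by
  rw [← hu X]
  simp

lemma ε_one_left_hom_app (hu : A.IsNormalizedUnit u) (a : G) (X : C) :
    (A.ε 1 a).hom.app X = u.hom.app ((A.F a).obj X) ≫ eqToHom (by rw [one_mul]; rfl) := by
  have := A.isEquiv 1
  have coc := A.cocycle 1 1 a X
  rw [ε_hom_app_congr (mul_one 1) rfl, ε_hom_app_congr rfl (one_mul a),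
    ε_one_one_hom_app hu] at coc
  have key : (A.F 1).map (u.hom.app ((A.F a).obj X)) =
      (A.F 1).map ((A.ε 1 a).hom.app X ≫
        eqToHom (show (A.F (1 * a)).obj X = (A.F a).obj X by rw [one_mul])) := by
    rw [← cancel_mono ((A.ε 1 a).hom.app X ≫
      eqToHom (show (A.F (1 * a)).obj X = (A.F (1 * (1 * a))).obj X by simp only [one_mul]))]
    simpa [eqToHom_map] using coc
  rw [(A.F 1).map_injective key]
  simp

lemma ε_one_right_hom_app (hu : A.IsNormalizedUnit u) (a : G) (X : C) :
    (A.ε a 1).hom.app X = (A.F a).map (u.hom.app X) ≫ eqToHom (by rw [mul_one]; rfl) := by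
  have coc := A.cocycle a 1 1 X
  rw [ε_hom_app_congr (mul_one a) rfl, ε_hom_app_congr rfl (mul_one 1),
    ε_one_one_hom_app hu] at coc
  have nat := (A.ε a 1).hom.naturality (u.hom.app X)
  simp only [Functor.map_comp, eqToHom_map, Category.assoc, eqToHom_trans, eqToHom_trans_assoc,
    Functor.comp_map, eqToHom_refl, Category.id_comp] at coc nat
  rw [reassoc_of% nat, cancel_epi, Functor.congr_hom (congrArg A.F (mul_one a))] at coc
  simpa [eqToHom_comp_iff, comp_eqToHom_iff] using coc

end GrpAction

lemma fpow_add_obj (F : C ⥤ C) (i j : ℕ) (X : C) :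
    (fpow F i).obj ((fpow F j).obj X) = (fpow F (i + j)).obj X :=
  Functor.congr_obj (fpow_comp F i j) X

/-- Taking the target `x` and the equation `gⁿ = x` as arguments lets `subst` absorb the
transports along equations in `G` such as `gⁱ gʲ = g^{i+j}`. -/
noncomputable def epsIterTo (A : GrpAction G C) (g : G) (u : A.F 1 ≅ 𝟭 C) (n : ℕ) (x : G)
    (h : g ^ n = x) : fpow (A.F g) n ≅ A.F x :=
  epsIter A g u n ≪≫ eqToIso (by rw [h])

section epsIterTo

variable {A : GrpAction G C} {g : G} {u : A.F 1 ≅ 𝟭 C}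

lemma epsIterTo_congr {m n : ℕ} (hmn : m = n) {x : G} (hm : g ^ m = x) (hn : g ^ n = x)
    (X : C) :
    (epsIterTo A g u m x hm).hom.app X =
      eqToHom (by rw [hmn]) ≫ (epsIterTo A g u n x hn).hom.app X := by
  subst hmn
  simp

lemma epsIterTo_hom_app_comp_eqToHom {n : ℕ} {x x' : G} (h : g ^ n = x) (hx : x = x') (X : C) :
    (epsIterTo A g u n x h).hom.app X ≫ eqToHom (by rw [hx]) =
      (epsIterTo A g u n x' (h.trans hx)).hom.app X := by
  subst hx
  simp

/- The leading `eqToHom`s below are identities; they make the composites typecheck without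
unfolding `fpow` (rewriting fails on terms that are only well typed up to that unfolding). -/
lemma epsIterTo_zero_hom_app {x : G} (h : g ^ 0 = x) (X : C) :
    (epsIterTo A g u 0 x h).hom.app X =
      eqToHom (show (fpow (A.F g) 0).obj X = X from rfl) ≫ u.inv.app X ≫
        eqToHom (by rw [← h, pow_zero]) := by
  subst h
  dsimp only [epsIterTo, epsIter]
  erw [Iso.trans_hom, Iso.trans_hom, NatTrans.comp_app, NatTrans.comp_app]
  simp only [Iso.symm_hom, eqToIso.hom, eqToHom_app, Category.assoc, eqToHom_trans]
  exact (Category.id_comp _).symm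

lemma epsIterTo_succ_hom_app {n : ℕ} {x y : G} (hx : g ^ n = x) (hy : g ^ (n + 1) = y) (X : C) :
    (epsIterTo A g u (n + 1) y hy).hom.app X =
      eqToHom (show (fpow (A.F g) (n + 1)).obj X = (fpow (A.F g) n).obj ((A.F g).obj X) from rfl) ≫
        (epsIterTo A g u n x hx).hom.app ((A.F g).obj X) ≫ (A.ε x g).hom.app X ≫
          eqToHom (by rw [← hx, ← hy, pow_succ]) := by
  subst hx hy
  dsimp only [epsIterTo, epsIter]
  erw [Iso.trans_hom, Iso.trans_hom, Iso.trans_hom, NatTrans.comp_app, NatTrans.comp_app,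
    NatTrans.comp_app]
  simp only [Functor.comp_obj, Functor.isoWhiskerLeft_hom, Functor.whiskerLeft_app, eqToIso.hom,
    eqToHom_app, eqToIso_refl, Iso.refl_hom, NatTrans.id_app, Category.comp_id, Iso.trans_refl]
  exact (Category.id_comp _).symm

lemma epsIterTo_one_hom_app (hu : A.IsNormalizedUnit u) (h : g ^ 1 = g) (X : C) :
    (epsIterTo A g u 1 g h).hom.app X =
      eqToHom (show (fpow (A.F g) 1).obj X = (A.F g).obj X from rfl) := by
  rw [epsIterTo_succ_hom_app (pow_zero g), epsIterTo_zero_hom_app,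
    GrpAction.ε_one_left_hom_app hu]
  simp

lemma map_epsIterTo_zero_comp_ε (hu : A.IsNormalizedUnit u) (a : G) {x : G} (h : g ^ 0 = x)
    (X : C) :
    (A.F a).map ((epsIterTo A g u 0 x h).hom.app X) ≫ (A.ε a x).hom.app X =
      eqToHom (by rw [← h, pow_zero, mul_one]; rfl) := by
  rw [epsIterTo_zero_hom_app, GrpAction.ε_hom_app_congr rfl (h.symm.trans (pow_zero g)),
    GrpAction.ε_one_right_hom_app hu]
  simp only [Functor.map_comp, eqToHom_map, Category.assoc, eqToHom_trans_assoc, eqToHom_refl,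
    Category.id_comp]
  rw [← Functor.map_comp_assoc, Iso.inv_hom_id_app]
  simp

lemma epsIterTo_add_hom_app (hu : A.IsNormalizedUnit u) {i j : ℕ} {x y : G} (hx : g ^ i = x)
    (hy : g ^ j = y) (hxy : g ^ (i + j) = x * y) (X : C) :
    (epsIterTo A g u i x hx).hom.app ((fpow (A.F g) j).obj X) ≫
        (A.F x).map ((epsIterTo A g u j y hy).hom.app X) ≫ (A.ε x y).hom.app X =
      eqToHom (fpow_add_obj (A.F g) i j X) ≫ (epsIterTo A g u (i + j) (x * y) hxy).hom.app X := by
  subst hx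
  induction j generalizing y X with
  | zero =>
    rw [map_epsIterTo_zero_comp_ε hu, epsIterTo_congr (Nat.add_zero i) hxy
      (by rw [← hy, pow_zero, mul_one]), eqToHom_trans_assoc]
    exact (epsIterTo_hom_app_comp_eqToHom rfl
      (show g ^ i = g ^ i * y by rw [← hy, pow_zero, mul_one]) X).trans (Category.id_comp _).symm
  | succ j ih =>
    subst hy
    rw [epsIterTo_succ_hom_app rfl, epsIterTo_congr (Nat.add_succ i j) hxy (by rw [← pow_add]; rfl),
      epsIterTo_succ_hom_app (n := i + j) (pow_add g i j),
      GrpAction.ε_hom_app_congr rfl (pow_succ g j)]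
    simp only [Functor.map_comp, eqToHom_map, Category.assoc, eqToHom_trans_assoc, eqToHom_refl,
      Category.id_comp]
    rw [← reassoc_of% A.cocycle (g ^ i) (g ^ j) g X]
    erw [eqToHom_refl, Category.id_comp, reassoc_of% (ih rfl _ (pow_add g i j))]
    simp only [eqToHom_trans]
    rfl

lemma epsIterTo_add_period_hom_app (hu : A.IsNormalizedUnit u) {d k : ℕ} (hd : g ^ d = 1)
    {x : G} (hx : g ^ k = x) (h : g ^ (k + d) = x) (X : C) :
    (epsIterTo A g u (k + d) x h).hom.app X =
      eqToHom (fpow_add_obj (A.F g) k d X).symm ≫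
        (fpow (A.F g) k).map ((epsIterTo A g u d 1 hd ≪≫ u).hom.app X) ≫
          (epsIterTo A g u k x hx).hom.app X := by
  have hadd := epsIterTo_add_hom_app hu hx hd (by rw [h, mul_one]) X
  rw [GrpAction.ε_one_right_hom_app hu, ← Functor.map_comp_assoc, ← Category.assoc,
    comp_eqToHom_iff] at hadd
  rw [Iso.trans_hom, NatTrans.comp_app]
  erw [NatTrans.naturality, hadd]
  simp [epsIterTo_hom_app_comp_eqToHom]

lemma isCompatiblePair_epsIterTo_trans (hu : A.IsNormalizedUnit u) {d : ℕ} (hd : g ^ d = 1) :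
    IsCompatiblePair d (A.F g) (epsIterTo A g u d 1 hd ≪≫ u) := by
  intro X
  have hd1 : g ^ (d + 1) = g := by rw [pow_succ, hd, one_mul]
  have h_succ : (epsIterTo A g u (d + 1) g hd1).hom.app X =
      eqToHom (show (fpow (A.F g) (d + 1)).obj X = (fpow (A.F g) d).obj ((A.F g).obj X) from rfl) ≫
        (epsIterTo A g u d 1 hd ≪≫ u).hom.app ((A.F g).obj X) := by
    rw [epsIterTo_succ_hom_app hd, GrpAction.ε_one_left_hom_app hu]
    simp
  have h_period := epsIterTo_add_period_hom_app hu hd (pow_one g) (by rw [add_comm, hd1]) X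
  rw [epsIterTo_one_hom_app hu, epsIterTo_congr (add_comm 1 d) _ hd1, h_succ, eq_comm,
    eqToHom_comp_iff, comp_eqToHom_iff] at h_period
  refine h_period.trans ?_
  simp only [Category.assoc, eqToHom_trans_assoc]
  erw [eqToHom_refl, Category.comp_id]
  rfl

end epsIterTo

section Cyclic

variable {d : ℕ} [NeZero d]

lemma gen_pow_val (x : Multiplicative (ZMod d)) :
    Multiplicative.ofAdd (1 : ZMod d) ^ (Multiplicative.toAdd x).val = x := by
  rw [← ofAdd_nsmul, nsmul_eq_mul, mul_one, ZMod.natCast_val, ZMod.cast_id', id_eq, ofAdd_toAdd]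

noncomputable def epsIterVal (A : GrpAction (Multiplicative (ZMod d)) C) (u : A.F 1 ≅ 𝟭 C)
    (x : Multiplicative (ZMod d)) :
    fpow (A.F (Multiplicative.ofAdd (1 : ZMod d))) (Multiplicative.toAdd x).val ≅ A.F x :=
  epsIterTo A _ u _ x (gen_pow_val x)

variable {A : GrpAction (Multiplicative (ZMod d)) C} {u : A.F 1 ≅ 𝟭 C}

lemma cyclicC_eq : cyclicC d A u =
    epsIterTo A (Multiplicative.ofAdd (1 : ZMod d)) u d 1 (gen_pow_card d) ≪≫ u :=
  (Iso.trans_assoc _ _ _).symm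

lemma inducedEps_hom_app_comp_epsIterVal (hu : A.IsNormalizedUnit u)
    (x y : Multiplicative (ZMod d)) (X : C) :
    (inducedEps d (A.F (Multiplicative.ofAdd (1 : ZMod d))) (cyclicC d A u) x y).hom.app X ≫
        (epsIterVal A u (x * y)).hom.app X =
      eqToHom (fpow_add_obj _ _ _ X) ≫
        (epsIterTo A _ u ((Multiplicative.toAdd x).val + (Multiplicative.toAdd y).val) (x * y)
          (by rw [pow_add, gen_pow_val, gen_pow_val])).hom.app X := by
  have hx := ZMod.val_lt (Multiplicative.toAdd x)
  have hy := ZMod.val_lt (Multiplicative.toAdd y)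
  by_cases h : (Multiplicative.toAdd x).val + (Multiplicative.toAdd y).val < d
  · have hval : (Multiplicative.toAdd (x * y)).val =
        (Multiplicative.toAdd x).val + (Multiplicative.toAdd y).val := by
      rw [toAdd_mul, ZMod.val_add, Nat.mod_eq_of_lt h]
    rw [epsIterVal, epsIterTo_congr hval _ (by rw [← hval, gen_pow_val])]
    simp [inducedEps, dif_pos h, eqToHom_app]
  · have hval : (Multiplicative.toAdd (x * y)).val =
        (Multiplicative.toAdd x).val + (Multiplicative.toAdd y).val - d := by
      rw [toAdd_mul, ZMod.val_add, Nat.mod_eq_sub_mod (by omega), Nat.mod_eq_of_lt (by omega)]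
    rw [epsIterVal, epsIterTo_congr hval _ (by rw [← hval, gen_pow_val])]
    simp only [inducedEps, dif_neg h, Iso.trans_hom, NatTrans.comp_app, eqToIso.hom, eqToHom_app,
      Functor.isoWhiskerRight_hom, Functor.whiskerRight_app]
    rw [epsIterTo_congr (show (Multiplicative.toAdd x).val + (Multiplicative.toAdd y).val =
        (Multiplicative.toAdd x).val + (Multiplicative.toAdd y).val - d + d by omega) _
      (by rw [pow_add, gen_pow_card, mul_one, ← hval, gen_pow_val]),
      epsIterTo_add_period_hom_app hu (gen_pow_card d) (by rw [← hval, gen_pow_val]), cyclicC_eq]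
    simp

end Cyclic

/-- Every `C_d`-action on `C` is isomorphic to the `C_d`-action induced by a
compatible pair: for a `C_d`-action `{F_{gⁱ}, ε}` with `F = F_g` (`g` the generator) and unit
`u`, the natural isomorphism `c = u ∘ ε^{(d)} : F^d ≅ 𝟭 C` satisfies `F c = c F`, and the
given action is isomorphic to the action induced by the pair `(F, c)`. -/
theorem cyclic_action_isomorphic_to_induced (d : ℕ) [NeZero d]
    (A : GrpAction (Multiplicative (ZMod d)) C) (u : A.F 1 ≅ 𝟭 C)
    (hu : ∀ X : C, (A.ε 1 1).hom.app X ≫ eqToHom (by rw [mul_one]; rfl) =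
      (A.F 1).map (u.hom.app X)) :
    IsCompatiblePair d (A.F (Multiplicative.ofAdd (1 : ZMod d))) (cyclicC d A u) ∧
    ∃ δ : ∀ x : Multiplicative (ZMod d),
        fpow (A.F (Multiplicative.ofAdd (1 : ZMod d))) (ZMod.val (Multiplicative.toAdd x)) ≅
          A.F x,
      ∀ (x y : Multiplicative (ZMod d)) (X : C),
        (inducedEps d (A.F (Multiplicative.ofAdd (1 : ZMod d))) (cyclicC d A u) x y).hom.app X ≫
            (δ (x * y)).hom.app X =
          (δ x).hom.app
              ((fpow (A.F (Multiplicative.ofAdd (1 : ZMod d)))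
                (ZMod.val (Multiplicative.toAdd y))).obj X) ≫
            (A.F x).map ((δ y).hom.app X) ≫ (A.ε x y).hom.app X := by
  refine ⟨?_, epsIterVal A u, fun x y X => ?_⟩
  · rw [cyclicC_eq]
    exact isCompatiblePair_epsIterTo_trans hu (gen_pow_card d)
  · rw [inducedEps_hom_app_comp_epsIterVal hu, epsIterVal, epsIterVal, epsIterTo_add_hom_app hu]
end

section
/- Let C be a skeletally small k-linear category with center Z(C) = k, and suppose every element of k has a d-th root. If (F, c) and (F, c') are two compatible pairs of order d with the same underlying autoequivalence F, then (F, c) and (F, c') are isomorphic as compatible pairs. -/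
/-!
The composite `c'⁻¹ ≫ c` is an automorphism of the identity functor, hence multiplication by a
nonzero scalar `λ` of the center `k`. For `b ^ d = λ`, the `d`-th power of the scalar
automorphism `a := b • 𝟙 F` is the scalar `λ` on `F^d`; since scalars commute with `c'`, this
gives `c = a^d ≫ c'`.
-/

open CategoryTheory

universe v u

variable {C : Type u} [Category.{v} C]

/-- The natural isomorphism `aⁱ : Fⁱ ≅ F'ⁱ` induced by `a : F ≅ F'`. -/
def powIso {F F' : C ⥤ C} (a : F ≅ F') : ∀ i : ℕ, fpow F i ≅ fpow F' i
  | 0 => Iso.refl _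
  | i + 1 => Functor.isoWhiskerLeft F (powIso a i) ≪≫ Functor.isoWhiskerRight a (fpow F' i)

section Scalars

variable {R : Type*} [Semiring R] [Preadditive C] [Linear R C]

@[simps]
def scalarIso {D : Type*} [Category D] (F : D ⥤ C) (r : Rˣ) : F ≅ F where
  hom := (r : R) • 𝟙 F
  inv := ((r⁻¹ : Rˣ) : R) • 𝟙 F
  hom_inv_id := by simp [smul_smul]
  inv_hom_id := by simp [smul_smul]

lemma scalarIso_trans_comm {D : Type*} [Category D] {F G : D ⥤ C} (e : F ≅ G) (r : Rˣ) :
    e ≪≫ scalarIso G r = scalarIso F r ≪≫ e := by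
  ext X
  simp

instance fpow_linear (F : C ⥤ C) [F.Linear R] : ∀ n, (fpow F n).Linear R
  | 0 => inferInstanceAs ((𝟭 C).Linear R)
  | n + 1 => have := fpow_linear F n; inferInstanceAs ((F ⋙ fpow F n).Linear R)

lemma powIso_scalarIso (F : C ⥤ C) [F.Linear R] (r : Rˣ) (n : ℕ) :
    powIso (scalarIso F r) n = scalarIso (fpow F n) (r ^ n) := by
  induction n with
  | zero => ext X; simp [powIso, fpow]
  | succ n ih =>
    ext X
    simp [powIso, ih, fpow, pow_succ', smul_smul]

end Scalars

lemma exists_eq_scalarIso_of_center {k : Type*} [DivisionRing k] [Preadditive C] [Linear k C]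
    (hZ : ∀ η : 𝟭 C ⟶ 𝟭 C, ∃ a : k, ∀ X : C, η.app X = a • 𝟙 X) (η : 𝟭 C ≅ 𝟭 C) :
    ∃ r : kˣ, η = scalarIso (𝟭 C) r := by
  obtain ⟨l, hl⟩ := hZ η.hom
  by_cases hl0 : l = 0
  · have hid : ∀ X : C, 𝟙 X = 0 := fun X => by
      simpa [hl X, hl0] using (η.inv_hom_id_app X).symm
    have hzero : ∀ {X Y : C} (f : X ⟶ Y), f = 0 := fun {X Y} f => by
      rw [← Category.comp_id f, hid Y, Limits.comp_zero]
    exact ⟨1, by ext X; exact (hzero _).trans (hzero _).symm⟩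
  · exact ⟨Units.mk0 l hl0, by ext X; simp [hl X]⟩

theorem compatPairs_same_functor_isomorphic_general (k : Type*) [Field k] [Preadditive C]
    [CategoryTheory.Linear k C]
    (hZ : ∀ η : 𝟭 C ⟶ 𝟭 C, ∃ a : k, ∀ X : C, η.app X = a • 𝟙 X)
    (d : ℕ) (hd : 2 ≤ d) (hroot : ∀ a : k, ∃ b : k, b ^ d = a)
    (F : C ⥤ C) [F.Linear k]
    (c c' : fpow F d ≅ 𝟭 C) :
    ∃ a : F ≅ F, c.hom = (powIso a d).hom ≫ c'.hom := by
  obtain ⟨r, hr⟩ := exists_eq_scalarIso_of_center hZ (c'.symm ≪≫ c)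
  obtain ⟨b, hb⟩ := hroot r
  have hb0 : b ≠ 0 := by
    rintro rfl
    exact r.ne_zero (by rw [← hb, zero_pow (by omega)])
  have hc : c = scalarIso (fpow F d) r ≪≫ c' := by
    rw [← scalarIso_trans_comm, ← hr, Iso.self_symm_id_assoc]
  refine ⟨scalarIso F (Units.mk0 b hb0), ?_⟩
  rw [powIso_scalarIso, hc, show Units.mk0 b hb0 ^ d = r from Units.ext (by simpa using hb)]
  rfl

/-- Let `C` be a (skeletally small) `k`-linear category whose center is `k`
(every natural endotransformation of the identity functor is a scalar), and suppose every
element of `k` has a `d`-th root.  If `(F, c)` and `(F, c')` are two compatible pairs of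
order `d` with the same underlying `k`-linear autoequivalence `F`, then `(F, c)` and
`(F, c')` are isomorphic as compatible pairs: there is `a : F ≅ F` with `c = c' ∘ a^d`. -/
theorem compatPairs_same_functor_isomorphic (k : Type*) [Field k] [Preadditive C]
    [CategoryTheory.Linear k C]
    (hZ : ∀ η : 𝟭 C ⟶ 𝟭 C, ∃ a : k, ∀ X : C, η.app X = a • 𝟙 X)
    (d : ℕ) (hd : 2 ≤ d) (hroot : ∀ a : k, ∃ b : k, b ^ d = a)
    (F : C ⥤ C) (hF : F.IsEquivalence) [F.Additive] [F.Linear k]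
    (c c' : fpow F d ≅ 𝟭 C)
    (hc : IsCompatiblePair d F c) (hc' : IsCompatiblePair d F c') :
    ∃ a : F ≅ F, c.hom = (powIso a d).hom ≫ c'.hom :=
  compatPairs_same_functor_isomorphic_general k hZ d hd hroot F c c'
end

section
/- Let G act on an additive category C. If the order |G| of the finite group G is invertible in C, then the counit ε : Ind ∘ U → Id_{C^G} of the adjunction (U, Ind) is a split epimorphism and the unit η' : Id_{C^G} → Ind ∘ U is a split monomorphism; explicitly, (1/|G|)(β_h)_{h∈G} is a section of ε_{(Y,β)} and (1/|G|)∑_{h∈G} β_h^{-1} is a retraction of η'_{(Y,β)}. -/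
open CategoryTheory

universe v u v₂ u₂

variable {G : Type*} [Group G] {C : Type u} [Category.{v} C]

open CategoryTheory.Limits

set_option linter.unusedSectionVars false

section Aux

variable [Preadditive C] (A : GrpAction G C) (Y : EqvObj A)

/-- A fully faithful functor between preadditive categories preserves zero morphisms. -/
theorem aux_map_zero (g : G) {X X' : C} : (A.F g).map (0 : X ⟶ X') = 0 := by
  haveI := A.isEquiv g
  obtain ⟨v, hv⟩ := (A.F g).map_surjective (0 : (A.F g).obj X' ⟶ (A.F g).obj X')
  have h0 : (A.F g).map (0 : X ⟶ X') = (A.F g).map ((0 : X ⟶ X') ≫ v) := by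
    rw [zero_comp]
  rw [h0, Functor.map_comp, hv, comp_zero]

theorem aux_E4 (g j : G) : (A.F g).map ((Y.α j).hom)
    = (Y.α g).inv ≫ (Y.α (g * j)).hom ≫ (A.ε g j).inv.app Y.pt := by
  rw [Y.compat g j]
  simp

theorem aux_L (g k : G) : (Y.α (g * k)).inv ≫ (Y.α g).hom
    = (A.ε g k).inv.app Y.pt ≫ (A.F g).map ((Y.α k).inv) := by
  have h1 : (Y.α (g * k)).hom ≫ (A.ε g k).inv.app Y.pt ≫ (A.F g).map ((Y.α k).inv)
      = (Y.α g).hom := by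
    rw [Y.compat g k]
    simp only [Category.assoc, Iso.hom_inv_id_app_assoc]
    rw [← Functor.map_comp]
    simp
  rw [← h1, Iso.inv_hom_id_assoc]

theorem aux_cast_inv {a b : G} (hab : a = b) :
    (Y.α a).inv = eqToHom (by rw [hab]) ≫ (Y.α b).inv := by
  subst hab; simp

theorem aux_cast_ε [Fintype G] [HasBiproduct fun h : G => (A.F h).obj Y.pt]
    {g a b : G} (hab : a = b) :
    (A.ε g a).inv.app Y.pt ≫ (A.F g).map (biproduct.ι (fun h : G => (A.F h).obj Y.pt) a)
    = eqToHom (by rw [hab]) ≫ (A.ε g b).inv.app Y.pt ≫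
        (A.F g).map (biproduct.ι (fun h : G => (A.F h).obj Y.pt) b) := by
  subst hab; simp

theorem aux_total {J : Type u₂} [Fintype J] (f : J → C) [HasBiproduct f] :
    ∑ j : J, biproduct.π f j ≫ biproduct.ι f j = 𝟙 (⨁ f) := by
  classical
  apply biproduct.hom_ext
  intro j
  simp only [Preadditive.sum_comp, Category.assoc, biproduct.ι_π, comp_dite, comp_zero,
    Category.id_comp]
  rw [Finset.sum_dite_eq' Finset.univ j]
  simp

end Aux

section Aux2

variable [Preadditive C] (A : GrpAction G C) (Y : EqvObj A) [Fintype G]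
  [HasBiproduct fun h : G => (A.F h).obj Y.pt]
  (αI : ∀ g : G, (⨁ fun h : G => (A.F h).obj Y.pt) ≅
      (A.F g).obj (⨁ fun h : G => (A.F h).obj Y.pt))
  (hαI : ∀ g h : G, biproduct.ι (fun h : G => (A.F h).obj Y.pt) h ≫ (αI g).hom =
      eqToHom (by rw [mul_inv_cancel_left]) ≫ (A.ε g (g⁻¹ * h)).inv.app Y.pt ≫
        (A.F g).map (biproduct.ι (fun h : G => (A.F h).obj Y.pt) (g⁻¹ * h)))

include hαI

theorem aux_K1 (g j : G) :
    biproduct.ι (fun h : G => (A.F h).obj Y.pt) (g * j) ≫ (αI g).hom =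
      (A.ε g j).inv.app Y.pt ≫ (A.F g).map (biproduct.ι (fun h : G => (A.F h).obj Y.pt) j) := by
  have h1 := hαI g (g * j)
  rw [aux_cast_ε A Y (inv_mul_cancel_left g j)] at h1
  rw [h1, ← Category.assoc, eqToHom_trans]
  simp

theorem aux_JE (g : G) {Z : C} (x y : (A.F g).obj (⨁ fun h : G => (A.F h).obj Y.pt) ⟶ Z)
    (hxy : ∀ j : G, (A.F g).map (biproduct.ι (fun h : G => (A.F h).obj Y.pt) j) ≫ x
      = (A.F g).map (biproduct.ι (fun h : G => (A.F h).obj Y.pt) j) ≫ y) : x = y := by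
  have h2 : (αI g).hom ≫ x = (αI g).hom ≫ y := by
    apply biproduct.hom_ext'
    intro h
    rw [← Category.assoc, ← Category.assoc, hαI g h]
    simp only [Category.assoc]
    rw [hxy]
  calc x = (αI g).inv ≫ ((αI g).hom ≫ x) := by simp
    _ = (αI g).inv ≫ ((αI g).hom ≫ y) := by rw [h2]
    _ = y := by simp

theorem aux_K2 (g j : G) :
    (A.F g).map (biproduct.π (fun h : G => (A.F h).obj Y.pt) j)
    = (αI g).inv ≫ biproduct.π (fun h : G => (A.F h).obj Y.pt) (g * j) ≫
        (A.ε g j).inv.app Y.pt := by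
  classical
  apply aux_JE A Y αI hαI g
  intro m
  have hm : (A.F g).map (biproduct.ι (fun h : G => (A.F h).obj Y.pt) m)
      = (A.ε g m).hom.app Y.pt ≫ biproduct.ι (fun h : G => (A.F h).obj Y.pt) (g * m) ≫
          (αI g).hom := by
    rw [aux_K1 A Y αI hαI g m, Iso.hom_inv_id_app_assoc]
  rw [← Functor.map_comp, hm]
  simp only [Category.assoc, Iso.hom_inv_id_assoc]
  by_cases hmj : m = j
  · subst hmj
    simp
  · rw [biproduct.ι_π_ne _ hmj, biproduct.ι_π_ne_assoc _ (fun hc => hmj (mul_left_cancel hc)),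
      aux_map_zero]
    simp

theorem aux_K3 (g : G) :
    ∑ j : G, (A.F g).map (biproduct.π (fun h : G => (A.F h).obj Y.pt) j) ≫
        (A.F g).map (biproduct.ι (fun h : G => (A.F h).obj Y.pt) j)
      = 𝟙 ((A.F g).obj (⨁ fun h : G => (A.F h).obj Y.pt)) := by
  have e1 : ∀ j : G, (A.F g).map (biproduct.π (fun h : G => (A.F h).obj Y.pt) j) ≫
      (A.F g).map (biproduct.ι (fun h : G => (A.F h).obj Y.pt) j)
      = (αI g).inv ≫ (biproduct.π (fun h : G => (A.F h).obj Y.pt) (g * j) ≫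
          biproduct.ι (fun h : G => (A.F h).obj Y.pt) (g * j)) ≫ (αI g).hom := by
    intro j
    rw [aux_K2 A Y αI hαI g j]
    simp only [Category.assoc]
    rw [← aux_K1 A Y αI hαI g j]
  rw [Finset.sum_congr rfl fun j _ => e1 j]
  have hre : ∑ j : G, (αI g).inv ≫ (biproduct.π (fun h : G => (A.F h).obj Y.pt) (g * j) ≫
        biproduct.ι (fun h : G => (A.F h).obj Y.pt) (g * j)) ≫ (αI g).hom
      = (αI g).inv ≫ (∑ j : G, biproduct.π (fun h : G => (A.F h).obj Y.pt) (g * j) ≫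
        biproduct.ι (fun h : G => (A.F h).obj Y.pt) (g * j)) ≫ (αI g).hom := by
    rw [Preadditive.sum_comp, Preadditive.comp_sum]
  have hre2 : ∑ j : G, biproduct.π (fun h : G => (A.F h).obj Y.pt) (g * j) ≫
        biproduct.ι (fun h : G => (A.F h).obj Y.pt) (g * j)
      = ∑ j : G, biproduct.π (fun h : G => (A.F h).obj Y.pt) j ≫
        biproduct.ι (fun h : G => (A.F h).obj Y.pt) j :=
    Fintype.sum_bijective _ (Group.mulLeft_bijective g) _ _ (fun j => rfl)
  rw [hre, hre2, aux_total]
  simp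

theorem aux_crux (g : G) :
    (A.F g).map (biproduct.lift fun h : G => (Y.α h).hom)
    = (Y.α g).inv ≫ (biproduct.lift fun h : G => (Y.α h).hom) ≫ (αI g).hom := by
  have hsum : (biproduct.lift fun h : G => (Y.α h).hom) =
      ∑ h : G, (Y.α h).hom ≫ biproduct.ι (fun h : G => (A.F h).obj Y.pt) h := by
    conv_lhs => rw [← Category.comp_id (biproduct.lift fun h : G => (Y.α h).hom),
      ← aux_total (fun h : G => (A.F h).obj Y.pt)]
    rw [Preadditive.comp_sum]
    refine Finset.sum_congr rfl fun j _ => ?_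
    rw [← Category.assoc, biproduct.lift_π]
  calc (A.F g).map (biproduct.lift fun h : G => (Y.α h).hom)
      = (A.F g).map (biproduct.lift fun h : G => (Y.α h).hom) ≫
          ∑ j : G, (A.F g).map (biproduct.π (fun h : G => (A.F h).obj Y.pt) j) ≫
            (A.F g).map (biproduct.ι (fun h : G => (A.F h).obj Y.pt) j) := by
        rw [aux_K3 A Y αI hαI g, Category.comp_id]
    _ = ∑ j : G, (Y.α g).inv ≫ ((Y.α (g * j)).hom ≫
          biproduct.ι (fun h : G => (A.F h).obj Y.pt) (g * j)) ≫ (αI g).hom := by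
        rw [Preadditive.comp_sum]
        refine Finset.sum_congr rfl fun j _ => ?_
        rw [← Category.assoc, ← Functor.map_comp, biproduct.lift_π, aux_E4 A Y g j]
        simp only [Category.assoc]
        rw [← aux_K1 A Y αI hαI g j]
    _ = (Y.α g).inv ≫ (∑ j : G, (Y.α (g * j)).hom ≫
          biproduct.ι (fun h : G => (A.F h).obj Y.pt) (g * j)) ≫ (αI g).hom := by
        rw [Preadditive.sum_comp, Preadditive.comp_sum]
    _ = (Y.α g).inv ≫ (biproduct.lift fun h : G => (Y.α h).hom) ≫ (αI g).hom := by
        have hre3 : ∑ j : G, (Y.α (g * j)).hom ≫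
              biproduct.ι (fun h : G => (A.F h).obj Y.pt) (g * j)
            = ∑ h : G, (Y.α h).hom ≫ biproduct.ι (fun h : G => (A.F h).obj Y.pt) h :=
          Fintype.sum_bijective _ (Group.mulLeft_bijective g) _ _ (fun j => rfl)
        rw [hre3, ← hsum]

end Aux2

/-- Let a finite group `G` act on an additive category `C`, with `|G|`
invertible in `C`.  Fix an equivariant object `(Y, β)` and let `(B, αI)` be the induction
`Ind(Y) = (⊕_{h} F_h Y, ε(Y))` of `Y`, an equivariant object.  Then the counit
`ε_{(Y,β)} = ∑_h β_h⁻¹ : Ind(Y) → (Y,β)` of the adjunction `(U, Ind)` is a split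
epimorphism in `C^G` — with section `(1/|G|)(β_h)_{h∈G}` — and the unit
`η'_{(Y,β)} = (β_h)_{h∈G} : (Y,β) → Ind(Y)` is a split monomorphism in `C^G` — with
retraction `(1/|G|) ∑_h β_h⁻¹`. -/
theorem counit_split_epi_unit_split_mono {G : Type*} [Group G] [Fintype G]
    {C : Type u} [Category.{v} C] [Preadditive C] (A : GrpAction G C)
    -- `|G|` is invertible in `C`
    (hinv : ∀ (X Y : C) (f : X ⟶ Y), ∃! f' : X ⟶ Y, f = (Fintype.card G) • f')
    (Y : EqvObj A)
    [HasBiproduct fun h : G => (A.F h).obj Y.pt]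
    -- the equivariant structure of the induction `Ind(Y)`:
    (αI : ∀ g : G, (⨁ fun h : G => (A.F h).obj Y.pt) ≅
      (A.F g).obj (⨁ fun h : G => (A.F h).obj Y.pt))
    (hαI : ∀ g h : G, biproduct.ι (fun h : G => (A.F h).obj Y.pt) h ≫ (αI g).hom =
      eqToHom (by rw [mul_inv_cancel_left]) ≫ (A.ε g (g⁻¹ * h)).inv.app Y.pt ≫
        (A.F g).map (biproduct.ι (fun h : G => (A.F h).obj Y.pt) (g⁻¹ * h)))
    (hcompat : ∀ g h : G, (αI (g * h)).hom =
      (αI g).hom ≫ (A.F g).map ((αI h).hom) ≫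
        (A.ε g h).hom.app (⨁ fun h : G => (A.F h).obj Y.pt)) :
    -- the counit is an equivariant morphism `Ind(Y) ⟶ (Y, β)` …
    (∀ g : G, (biproduct.desc fun h : G => (Y.α h).inv) ≫ (Y.α g).hom =
      (αI g).hom ≫ (A.F g).map (biproduct.desc fun h : G => (Y.α h).inv)) ∧
    -- … which is a split epimorphism, with section `(1/|G|)(β_h)_{h∈G}`:
    (∃ s : Y.pt ⟶ ⨁ fun h : G => (A.F h).obj Y.pt,
      (Fintype.card G) • s = (biproduct.lift fun h : G => (Y.α h).hom) ∧
      (∀ g : G, s ≫ (αI g).hom = (Y.α g).hom ≫ (A.F g).map s) ∧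
      s ≫ (biproduct.desc fun h : G => (Y.α h).inv) = 𝟙 Y.pt) ∧
    -- the unit is an equivariant morphism `(Y, β) ⟶ Ind(Y)` …
    (∀ g : G, (biproduct.lift fun h : G => (Y.α h).hom) ≫ (αI g).hom =
      (Y.α g).hom ≫ (A.F g).map (biproduct.lift fun h : G => (Y.α h).hom)) ∧
    -- … which is a split monomorphism, with retraction `(1/|G|)∑_h β_h⁻¹`:
    (∃ r : (⨁ fun h : G => (A.F h).obj Y.pt) ⟶ Y.pt,
      (Fintype.card G) • r = (biproduct.desc fun h : G => (Y.α h).inv) ∧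
      (∀ g : G, r ≫ (Y.α g).hom = (αI g).hom ≫ (A.F g).map r) ∧
      (biproduct.lift fun h : G => (Y.α h).hom) ≫ r = 𝟙 Y.pt) := by

  classical
  have goal1 : ∀ g : G, (biproduct.desc fun h : G => (Y.α h).inv) ≫ (Y.α g).hom =
      (αI g).hom ≫ (A.F g).map (biproduct.desc fun h : G => (Y.α h).inv) := by
    intro g
    apply biproduct.hom_ext'
    intro h
    rw [biproduct.ι_desc_assoc]
    rw [← Category.assoc, hαI g h]
    simp only [Category.assoc]
    rw [← Functor.map_comp, biproduct.ι_desc]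
    rw [aux_cast_inv A Y (show h = g * (g⁻¹ * h) by rw [mul_inv_cancel_left])]
    rw [Category.assoc, aux_L A Y g (g⁻¹ * h)]
  have goal3 : ∀ g : G, (biproduct.lift fun h : G => (Y.α h).hom) ≫ (αI g).hom =
      (Y.α g).hom ≫ (A.F g).map (biproduct.lift fun h : G => (Y.α h).hom) := by
    intro g
    rw [aux_crux A Y αI hαI g, Iso.hom_inv_id_assoc]
  have hFe : ∀ g : G, (A.F g).map (biproduct.desc fun h : G => (Y.α h).inv)
      = (αI g).inv ≫ (biproduct.desc fun h : G => (Y.α h).inv) ≫ (Y.α g).hom := by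
    intro g
    rw [goal1 g, Iso.inv_hom_id_assoc]
  have hue : (biproduct.lift fun h : G => (Y.α h).hom) ≫
      (biproduct.desc fun h : G => (Y.α h).inv) = (Fintype.card G) • 𝟙 Y.pt := by
    rw [← Category.id_comp (biproduct.desc fun h : G => (Y.α h).inv),
      ← aux_total (fun h : G => (A.F h).obj Y.pt), Preadditive.sum_comp, Preadditive.comp_sum]
    have e2 : ∀ j : G, (biproduct.lift fun h : G => (Y.α h).hom) ≫
        (biproduct.π (fun h : G => (A.F h).obj Y.pt) j ≫
          biproduct.ι (fun h : G => (A.F h).obj Y.pt) j) ≫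
          (biproduct.desc fun h : G => (Y.α h).inv) = 𝟙 Y.pt := by
      intro j
      simp
    rw [Finset.sum_congr rfl fun j _ => e2 j]
    simp [Finset.card_univ]
  have cancel : ∀ {X Z : C} (a b : X ⟶ Z),
      (Fintype.card G) • a = (Fintype.card G) • b → a = b := by
    intro X Z a b hab
    obtain ⟨c, -, hcu⟩ := hinv X Z ((Fintype.card G) • a)
    exact (hcu a rfl).trans (hcu b hab).symm
  obtain ⟨s, hs, -⟩ := hinv Y.pt _ (biproduct.lift fun h : G => (Y.α h).hom)
  have hFs : ∀ g : G, (A.F g).map (biproduct.lift fun h : G => (Y.α h).hom)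
      = (Fintype.card G) • (A.F g).map s := by
    intro g
    have h1 : (biproduct.lift fun h : G => (Y.α h).hom)
        = ((biproduct.lift fun h : G => (Y.α h).hom) ≫
            (biproduct.desc fun h : G => (Y.α h).inv)) ≫ s := by
      rw [hue, Preadditive.nsmul_comp, Category.id_comp, ← hs]
    conv_lhs => rw [h1]
    rw [Functor.map_comp, Functor.map_comp, aux_crux A Y αI hαI g, hFe g]
    simp only [Category.assoc, Iso.hom_inv_id_assoc]
    rw [reassoc_of% hue]
    simp
  have hseq : ∀ g : G, s ≫ (αI g).hom = (Y.α g).hom ≫ (A.F g).map s := by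
    intro g
    apply cancel
    rw [← Preadditive.nsmul_comp, ← hs, goal3 g, ← Preadditive.comp_nsmul, ← hFs g]
  have hse : s ≫ (biproduct.desc fun h : G => (Y.α h).inv) = 𝟙 Y.pt := by
    apply cancel
    rw [← Preadditive.nsmul_comp, ← hs, hue]
  obtain ⟨r, hr, -⟩ := hinv _ Y.pt (biproduct.desc fun h : G => (Y.α h).inv)
  have hFr : ∀ g : G, (A.F g).map (biproduct.desc fun h : G => (Y.α h).inv)
      = (Fintype.card G) • (A.F g).map r := by
    intro g
    have h1 : (biproduct.desc fun h : G => (Y.α h).inv)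
        = r ≫ (biproduct.lift fun h : G => (Y.α h).hom) ≫
            (biproduct.desc fun h : G => (Y.α h).inv) := by
      rw [hue, Preadditive.comp_nsmul, Category.comp_id, ← hr]
    conv_lhs => rw [h1]
    rw [Functor.map_comp, Functor.map_comp, aux_crux A Y αI hαI g, hFe g]
    simp only [Category.assoc, Iso.hom_inv_id_assoc]
    rw [reassoc_of% hue]
    simp
  have hreq : ∀ g : G, r ≫ (Y.α g).hom = (αI g).hom ≫ (A.F g).map r := by
    intro g
    apply cancel
    rw [← Preadditive.nsmul_comp, ← hr, goal1 g, ← Preadditive.comp_nsmul, ← hFr g]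
  have hur : (biproduct.lift fun h : G => (Y.α h).hom) ≫ r = 𝟙 Y.pt := by
    apply cancel
    rw [← Preadditive.comp_nsmul, ← hr, hue]
  exact ⟨goal1, ⟨s, hs.symm, hseq, hse⟩, goal3, ⟨r, hr.symm, hreq, hur⟩⟩
end

section
/- Let a ∈ G be a central element and {F_g, ε_{g,h}} a G-action on an additive category C. Then setting (c_a)_g = (ε_{g,a})^{-1} ∘ ε_{a,g} : F_a F_g ≅ F_g F_a makes (F_a, c_a) a G-equivariant endofunctor of C, and the induced endofunctor (F_a, c_a)^G on C^G is isomorphic to the identity functor via the natural isomorphism ψ with ψ_{(X,α)} = α_a. -/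
open CategoryTheory

universe v u v₂ u₂

variable {G : Type*} [Group G] {C : Type u} [Category.{v} C] {D : Type u₂} [Category.{v₂} D]

/-- The natural isomorphisms `(c_a)_g = ε_{g,a}⁻¹ ∘ ε_{a,g} : F_a F_g ≅ F_g F_a` attached
to a central element `a ∈ G`. -/
def ca {G : Type*} [Group G] {C : Type u} [Category.{v} C] (A : GrpAction G C)
    (a : G) (ha : ∀ g : G, a * g = g * a) (g : G) : A.F g ⋙ A.F a ≅ A.F a ⋙ A.F g :=
  A.ε a g ≪≫ eqToIso (by rw [ha]) ≪≫ (A.ε g a).symm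

namespace GrpAction

variable (A : GrpAction G C)

lemma eqToHom_comp_ε_hom_app {g g' h h' : G} (hg : g = g') (hh : h = h') (X : C) :
    eqToHom (by rw [hg, hh]) ≫ (A.ε g' h').hom.app X =
      (A.ε g h).hom.app X ≫ eqToHom (by rw [hg, hh]) := by
  subst hg hh; simp

lemma ε_hom_app_comp_ε_hom_app (g h k : G) (X : C) :
    (A.ε g h).hom.app ((A.F k).obj X) ≫ (A.ε (g * h) k).hom.app X =
      (A.F g).map ((A.ε h k).hom.app X) ≫ (A.ε g (h * k)).hom.app X ≫
        eqToHom (by rw [mul_assoc]) := by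
  have hc := A.cocycle g h k X
  rw [← Category.assoc, comp_eqToHom_iff] at hc
  simp [hc]

end GrpAction

lemma EqvObj.α_hom_comp_eqToHom {A : GrpAction G C} (M : EqvObj A) {g g' : G} (e : g = g') :
    (M.α g).hom ≫ eqToHom (by rw [e]) = (M.α g').hom := by
  subst e; simp

def EqvObj.isoMk_s15 {A : GrpAction G C} {M N : EqvObj A} (e : M.pt ≅ N.pt)
    (he : ∀ g : G, e.hom ≫ (N.α g).hom = (M.α g).hom ≫ (A.F g).map e.hom) : M ≅ N where
  hom := ⟨e.hom, he⟩
  inv := ⟨e.inv, fun g => by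
    rw [Iso.inv_comp_eq, ← Category.assoc, he, Category.assoc, ← Functor.map_comp,
      e.hom_inv_id, CategoryTheory.Functor.map_id, Category.comp_id]⟩
  hom_inv_id := Subtype.ext e.hom_inv_id
  inv_hom_id := Subtype.ext e.inv_hom_id

section Central

variable (A : GrpAction G C) (a : G) (ha : ∀ g : G, a * g = g * a)

/- Composing both sides with `ε_{gh,a}` and applying the cocycle identity three times reduces
each to `ε_{a,g} F_h ≫ ε_{ag,h}`, up to transport along `ag = ga` and `ah = ha`. -/
lemma ca_compat (g h : G) (X : C) :
    (A.F a).map ((A.ε g h).hom.app X) ≫ (ca A a ha (g * h)).hom.app X =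
      (ca A a ha g).hom.app ((A.F h).obj X) ≫
        (A.F g).map ((ca A a ha h).hom.app X) ≫ (A.ε g h).hom.app ((A.F a).obj X) := by
  rw [← cancel_mono ((A.ε (g * h) a).hom.app X)]
  simp only [ca, Iso.trans_hom, eqToIso.hom, Iso.symm_hom, NatTrans.comp_app,
    eqToHom_app, Functor.map_comp, eqToHom_map, Category.assoc, Iso.inv_hom_id_app,
    Category.comp_id]
  rw [reassoc_of% (A.cocycle a g h X).symm, A.ε_hom_app_comp_ε_hom_app,
    ← Functor.map_comp_assoc, Iso.inv_hom_id_app, CategoryTheory.Functor.map_id,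
    Category.id_comp,
    reassoc_of% (A.eqToHom_comp_ε_hom_app rfl (ha h) X),
    reassoc_of% (A.cocycle g a h X).symm, Iso.inv_hom_id_app_assoc,
    reassoc_of% (A.eqToHom_comp_ε_hom_app (ha g) rfl X)]
  simp only [eqToHom_trans]

/- By `compat` both sides are `α_{ga} ≫ ε_{g,a}⁻¹`, since `α_{ag} = α_{ga}` up to
transport. -/
lemma EqvObj.α_hom_comp_map_α_hom_comp_ca (M : EqvObj A) (g : G) :
    (M.α a).hom ≫ (A.F a).map (M.α g).hom ≫ (ca A a ha g).hom.app M.pt =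
      (M.α g).hom ≫ (A.F g).map (M.α a).hom := by
  have hα := M.α_hom_comp_eqToHom (ha g)
  rw [M.compat a g, M.compat g a] at hα
  simp only [ca, Iso.trans_hom, eqToIso.hom, Iso.symm_hom, NatTrans.comp_app, eqToHom_app,
    ← Category.assoc] at hα ⊢
  rw [hα]
  simp

end Central

/-- Let `a ∈ G` be central and `{F_g, ε_{g,h}}` a `G`-action on `C`.
Then `(F_a, c_a)` with `(c_a)_g = ε_{g,a}⁻¹ ∘ ε_{a,g}` is a `G`-equivariant endofunctor of
`C`, and the induced endofunctor `(F_a, c_a)^G` of `C^G` is isomorphic to the identity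
functor via the natural isomorphism `ψ` with `ψ_{(X,α)} = α_a`. -/
theorem central_element_equivariant_endofunctor {G : Type*} [Group G]
    {C : Type u} [Category.{v} C] (A : GrpAction G C) (a : G)
    (ha : ∀ g : G, a * g = g * a) :
    ∃ hcompat : ∀ (g h : G) (X : C),
      (A.F a).map ((A.ε g h).hom.app X) ≫ (ca A a ha (g * h)).hom.app X =
        (ca A a ha g).hom.app ((A.F h).obj X) ≫
          (A.F g).map ((ca A a ha h).hom.app X) ≫ (A.ε g h).hom.app ((A.F a).obj X),
      ∃ ψ : 𝟭 (EqvObj A) ≅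
          inducedFunctor (⟨A.F a, ca A a ha, hcompat⟩ : EqvFunctor A A),
        ∀ M : EqvObj A, (ψ.hom.app M).1 = (M.α a).hom :=
  ⟨ca_compat A a ha,
    NatIso.ofComponents
      (fun M => EqvObj.isoMk_s15 (M.α a) (EqvObj.α_hom_comp_map_α_hom_comp_ca A a ha M))
      (fun f => Subtype.ext (f.2 a)),
    fun _ => rfl⟩
end

section
/- Let G be a finite abelian group splitting over a field k, acting k-linearly on a k-linear additive category C. For each equivariant object (X, α) in C^G, the morphism f : ⊕_{χ∈Ĝ} F_χ(X,α) → Ind(X) whose restriction to F_χ(X,α) is (χ(h^{-1})α_h)_{h∈G} is an isomorphism in C^G, with inverse whose χ-th component is (1/|G|)∑_{h∈G} χ(h)α_h^{-1}. -/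
open CategoryTheory

universe v u v₂ u₂

variable {G : Type*} [Group G] {C : Type u} [Category.{v} C]

open CategoryTheory.Limits

/-! Splitting makes `|G|` invertible in `k`, and the factors of `kG ≅ k^G` give `|G|` distinct
characters, so by Dedekind's independence of characters the character table is square. In the
biproduct decompositions, `f` and the proposed inverse are the matrices `(χ(h⁻¹) α_h)` and
`(|G|⁻¹ χ(h) α_h⁻¹)`; one composite is the identity by the orthogonality relation
`∑_h χ(h⁻¹) χ'(h) = |G| δ_{χχ'}`, hence so is the other, a one-sided inverse of a square matrix
being two-sided. The `χ`-component of `f` is the canonical map `X ⟶ Ind X` of the twisted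
equivariant structure `χ(g⁻¹) α_g`, and such maps commute with the structure of `Ind X` by the
cocycle identity; this gives equivariance. -/

section Characters

variable {K : Type*} [Field K] {Γ : Type*} [CommGroup Γ]

theorem linearIndependent_coe_monoidHom_units :
    LinearIndependent K fun (χ : Γ →* Kˣ) (g : Γ) => (χ g : K) :=
  (linearIndependent_monoidHom Γ K).comp (fun χ => (Units.coeHom K).comp χ)
    fun _ _ h => MonoidHom.ext fun g => Units.ext (DFunLike.congr_fun h g)

instance [Finite Γ] : Finite (Γ →* Kˣ) :=
  linearIndependent_coe_monoidHom_units.finite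

noncomputable def splitChar (φ : MonoidAlgebra K Γ ≃ₐ[K] (Γ → K)) (g : Γ) : Γ →* Kˣ :=
  ((MonoidAlgebra.lift K K Γ).symm ((Pi.evalAlgHom K (fun _ => K) g).comp φ.toAlgHom)).toHomUnits

theorem coe_splitChar_apply (φ : MonoidAlgebra K Γ ≃ₐ[K] (Γ → K)) (g t : Γ) :
    (splitChar φ g t : K) = φ (MonoidAlgebra.single t 1) g :=
  rfl

theorem splitChar_injective (φ : MonoidAlgebra K Γ ≃ₐ[K] (Γ → K)) :
    Function.Injective (splitChar φ) := by
  classical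
  intro g₀ g₁ h
  have heval : (Pi.evalAlgHom K (fun _ => K) g₀).comp φ.toAlgHom =
      (Pi.evalAlgHom K (fun _ => K) g₁).comp φ.toAlgHom :=
    MonoidAlgebra.algHom_ext (fun t => by simp [← coe_splitChar_apply, h]) (Subsingleton.elim _ _)
  by_contra hne
  simpa [Pi.single_apply, hne] using DFunLike.congr_fun heval (φ.symm (Pi.single g₀ 1))

variable [Fintype Γ]

theorem sum_coe_monoidHom_units (ψ : Γ →* Kˣ) [Decidable (ψ = 1)] :
    ∑ g, (ψ g : K) = if ψ = 1 then (Fintype.card Γ : K) else 0 := by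
  classical
  have hcoe : (Units.coeHom K).comp ψ = 1 ↔ ψ = 1 :=
    ⟨fun h => MonoidHom.ext fun g => Units.ext (DFunLike.congr_fun h g), fun h => by simp [h]⟩
  simpa [hcoe] using sum_hom_units ((Units.coeHom K).comp ψ)

theorem sum_coe_inv_mul_coe [DecidableEq (Γ →* Kˣ)] (χ χ' : Γ →* Kˣ) :
    ∑ g, (χ g⁻¹ : K) * χ' g = if χ = χ' then (Fintype.card Γ : K) else 0 := by
  convert sum_coe_monoidHom_units (χ⁻¹ * χ') using 1
  · simp
  · refine if_congr ?_ rfl rfl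
    simp only [MonoidHom.ext_iff, MonoidHom.mul_apply, MonoidHom.inv_apply, MonoidHom.one_apply,
      inv_mul_eq_one]

theorem card_monoidHom_units_of_split (φ : MonoidAlgebra K Γ ≃ₐ[K] (Γ → K))
    [Fintype (Γ →* Kˣ)] : Fintype.card (Γ →* Kˣ) = Fintype.card Γ :=
  le_antisymm
    (by simpa using
      (linearIndependent_coe_monoidHom_units (K := K) (Γ := Γ)).fintype_card_le_finrank)
    (Fintype.card_le_of_injective _ (splitChar_injective φ))

/- `φ` sends `x = ∑_g g` to the function of character sums `g ↦ ∑_t (splitChar φ g) t`, each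
a multiple of `|Γ|`; so `|Γ| = 0` would force `x = 0`. -/
theorem natCast_card_ne_zero_of_split (φ : MonoidAlgebra K Γ ≃ₐ[K] (Γ → K)) :
    (Fintype.card Γ : K) ≠ 0 := by
  classical
  set x : MonoidAlgebra K Γ := ∑ g, MonoidAlgebra.single g 1
  have hx : x.coeff 1 = 1 := by simp [x, MonoidAlgebra.coeff_sum, Finsupp.single_apply]
  intro hcard
  have hφx : φ x = 0 := by
    ext g
    simp [x, ← coe_splitChar_apply, sum_coe_monoidHom_units, hcard]
  simp [(map_eq_zero_iff φ φ.injective).mp hφx] at hx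

theorem charMatrix_mul_eq_one [DecidableEq (Γ →* Kˣ)] (hcard : (Fintype.card Γ : K) ≠ 0) :
    (Matrix.of fun (χ : Γ →* Kˣ) (g : Γ) => (χ g⁻¹ : K)) *
      Matrix.of (fun (g : Γ) (χ : Γ →* Kˣ) => (Fintype.card Γ : K)⁻¹ * χ g) = 1 := by
  ext χ χ'
  simp only [Matrix.mul_apply, Matrix.of_apply, mul_left_comm _ (Fintype.card Γ : K)⁻¹,
    ← Finset.mul_sum, sum_coe_inv_mul_coe, Matrix.one_apply]
  split_ifs <;> simp [hcard]

end Characters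

namespace CategoryTheory.Limits.biproduct

variable [Preadditive C] {J : Type*} {f : J → C} [HasBiproduct f]

-- Mathlib's `biproduct.lift_eq` and `biproduct.lift_desc` only allow index types in `Type`.
theorem lift_eq_sum [Fintype J] {T : C} (g : ∀ j, T ⟶ f j) :
    biproduct.lift g = ∑ j, g j ≫ biproduct.ι f j := by
  rw [← Category.comp_id (biproduct.lift g), ← IsBilimit.total (biproduct.isBilimit f)]
  simp [Preadditive.comp_sum]

theorem lift_desc_eq_sum [Fintype J] {T U : C} (g : ∀ j, T ⟶ f j) (h : ∀ j, f j ⟶ U) :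
    biproduct.lift g ≫ biproduct.desc h = ∑ j, g j ≫ h j := by
  simp [lift_eq_sum, Preadditive.sum_comp]

variable {R : Type*} [CommSemiring R] [Linear R C] {I : Type*} {P : I → C} {Q : J → C}
  [HasBiproduct P] [HasBiproduct Q]

noncomputable def smulMatrix (a : Matrix I J R) (m : ∀ i j, P i ⟶ Q j) : ⨁ P ⟶ ⨁ Q :=
  biproduct.desc fun i => biproduct.lift fun j => a i j • m i j

@[simp]
theorem ι_smulMatrix (a : Matrix I J R) (m : ∀ i j, P i ⟶ Q j) (i : I) :
    biproduct.ι P i ≫ smulMatrix a m = biproduct.lift fun j => a i j • m i j :=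
  biproduct.ι_desc _ _

@[simp]
theorem smulMatrix_π (a : Matrix I J R) (m : ∀ i j, P i ⟶ Q j) (j : J) :
    smulMatrix a m ≫ biproduct.π Q j = biproduct.desc fun i => a i j • m i j := by
  ext i
  rw [← Category.assoc, ι_smulMatrix, biproduct.lift_π, biproduct.ι_desc]

theorem smulMatrix_comp_smulMatrix [Fintype J] {L : Type*} {S : L → C} [HasBiproduct S]
    (a : Matrix I J R) (b : Matrix J L R) {m : ∀ i j, P i ⟶ Q j} {n : ∀ j l, Q j ⟶ S l}
    {w : ∀ i l, P i ⟶ S l} (hw : ∀ i j l, m i j ≫ n j l = w i l) :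
    smulMatrix a m ≫ smulMatrix b n = smulMatrix (a * b) w := by
  ext l i
  simp only [Category.assoc, smulMatrix_π, biproduct.ι_desc]
  rw [← Category.assoc, ι_smulMatrix, lift_desc_eq_sum]
  simp [smul_smul, hw, Matrix.mul_apply, Finset.sum_smul, mul_comm]

theorem smulMatrix_one [DecidableEq I] {w : ∀ i i', P i ⟶ P i'} (hw : ∀ i, w i i = 𝟙 (P i)) :
    smulMatrix (1 : Matrix I I R) w = 𝟙 (⨁ P) := by
  ext i' i
  by_cases h : i = i'
  · subst h
    simp [hw]
  · simp [Matrix.one_apply_ne h, biproduct.ι_π_ne _ h]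

end CategoryTheory.Limits.biproduct

namespace GrpAction

variable [Preadditive C] (A : GrpAction G C)

theorem ι_mul_comp_of_ι_comp {X : C} [HasBiproduct fun h : G => (A.F h).obj X]
    {ρ : ∀ g : G, (⨁ fun h : G => (A.F h).obj X) ⟶ (A.F g).obj (⨁ fun h : G => (A.F h).obj X)}
    (hρ : ∀ g h : G, biproduct.ι (fun h : G => (A.F h).obj X) h ≫ ρ g =
      eqToHom (by rw [mul_inv_cancel_left]) ≫ (A.ε g (g⁻¹ * h)).inv.app X ≫
        (A.F g).map (biproduct.ι (fun h : G => (A.F h).obj X) (g⁻¹ * h)))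
    (g h : G) :
    biproduct.ι (fun h : G => (A.F h).obj X) (g * h) ≫ ρ g =
      (A.ε g h).inv.app X ≫ (A.F g).map (biproduct.ι (fun h : G => (A.F h).obj X) h) := by
  have transport : ∀ (x : G) (e : (A.F (g * h)).obj X = (A.F (g * x)).obj X), x = h →
      eqToHom e ≫ (A.ε g x).inv.app X ≫ (A.F g).map (biproduct.ι (fun h : G => (A.F h).obj X) x) =
        (A.ε g h).inv.app X ≫ (A.F g).map (biproduct.ι (fun h : G => (A.F h).obj X) h) := by
    rintro _ _ rfl
    simp
  exact (hρ g (g * h)).trans (transport _ _ (inv_mul_cancel_left g h))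

theorem lift_comp_eq_of_cocycle [Fintype G] {X : C} [HasBiproduct fun h : G => (A.F h).obj X]
    {ρ : ∀ g : G, (⨁ fun h : G => (A.F h).obj X) ⟶ (A.F g).obj (⨁ fun h : G => (A.F h).obj X)}
    (hρ : ∀ g h : G, biproduct.ι (fun h : G => (A.F h).obj X) (g * h) ≫ ρ g =
      (A.ε g h).inv.app X ≫ (A.F g).map (biproduct.ι (fun h : G => (A.F h).obj X) h))
    {β : ∀ g : G, X ⟶ (A.F g).obj X}
    (hβ : ∀ g h : G, β (g * h) = β g ≫ (A.F g).map (β h) ≫ (A.ε g h).hom.app X)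
    (g : G) [(A.F g).Additive] :
    biproduct.lift β ≫ ρ g = β g ≫ (A.F g).map (biproduct.lift β) := by
  rw [biproduct.lift_eq_sum, Functor.map_sum, Preadditive.sum_comp, Preadditive.comp_sum]
  refine (Fintype.sum_equiv (Equiv.mulLeft g) _ _ fun h => ?_).symm
  simp [hβ, hρ]

end GrpAction

namespace EqvObj

variable [Preadditive C] {A : GrpAction G C}

theorem char_smul_compat {k : Type*} [CommSemiring k] [Linear k C] (M : EqvObj A)
    (χ : G →* kˣ) (g h : G) [(A.F g).Additive] [(A.F g).Linear k] :
    ((χ (g * h)⁻¹ : kˣ) : k) • (M.α (g * h)).hom =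
      (((χ g⁻¹ : kˣ) : k) • (M.α g).hom) ≫ (A.F g).map (((χ h⁻¹ : kˣ) : k) • (M.α h).hom) ≫
        (A.ε g h).hom.app M.pt := by
  simp [M.compat g h, smul_smul, mul_comm]

end EqvObj

/-- Let `G` be a finite abelian group which splits over the field `k`
(i.e. `kG` is a product of copies of `k`), acting `k`-linearly on a `k`-linear additive
category `C`.  For each equivariant object `(X, α) ∈ C^G`, the morphism
`f : ⊕_{χ∈Ĝ} F_χ(X,α) → Ind(X)` whose restriction to the `χ`-component is
`(χ(h⁻¹)α_h)_{h∈G}` is an isomorphism in `C^G` — it is compatible with the equivariant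
structures of both sides, and it has the two-sided inverse whose `χ`-th component is
`(1/|G|) ∑_{h∈G} χ(h) α_h⁻¹`. -/
theorem dual_monad_iso {G : Type*} [CommGroup G] [Fintype G]
    (k : Type*) [Field k] [Preadditive C] [CategoryTheory.Linear k C]
    (hsplit : Nonempty (MonoidAlgebra k G ≃ₐ[k] (G → k)))
    (A : GrpAction G C)
    (hadd : ∀ g : G, (A.F g).Additive) (hlin : ∀ g : G, (A.F g).Linear k)
    (M : EqvObj A)
    [HasBiproduct fun h : G => (A.F h).obj M.pt]
    [HasBiproduct fun _ : G →* kˣ => M.pt]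
    -- the equivariant structure of `Ind(X)`:
    (αI : ∀ g : G, (⨁ fun h : G => (A.F h).obj M.pt) ≅
      (A.F g).obj (⨁ fun h : G => (A.F h).obj M.pt))
    (hαI : ∀ g h : G, biproduct.ι (fun h : G => (A.F h).obj M.pt) h ≫ (αI g).hom =
      eqToHom (by rw [mul_inv_cancel_left]) ≫ (A.ε g (g⁻¹ * h)).inv.app M.pt ≫
        (A.F g).map (biproduct.ι (fun h : G => (A.F h).obj M.pt) (g⁻¹ * h)))
    -- the equivariant structure of `⊕_{χ∈Ĝ} F_χ(X, α)`:
    (αS : ∀ g : G, (⨁ fun _ : G →* kˣ => M.pt) ≅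
      (A.F g).obj (⨁ fun _ : G →* kˣ => M.pt))
    (hαS : ∀ (g : G) (χ : G →* kˣ),
      biproduct.ι (fun _ : G →* kˣ => M.pt) χ ≫ (αS g).hom =
        (((χ g⁻¹ : kˣ) : k) • (M.α g).hom) ≫
          (A.F g).map (biproduct.ι (fun _ : G →* kˣ => M.pt) χ)) :
    -- `f` with the components `(χ(h⁻¹) α_h)_{h∈G}` …
    ∃ f : (⨁ fun _ : G →* kˣ => M.pt) ⟶ ⨁ fun h : G => (A.F h).obj M.pt,
      (∀ χ : G →* kˣ, biproduct.ι (fun _ : G →* kˣ => M.pt) χ ≫ f =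
        biproduct.lift fun h : G => ((χ h⁻¹ : kˣ) : k) • (M.α h).hom) ∧
      -- … is equivariant, i.e. a morphism in `C^G` …
      (∀ g : G, f ≫ (αI g).hom = (αS g).hom ≫ (A.F g).map f) ∧
      -- … and is an isomorphism, with the described inverse:
      ∃ finv : (⨁ fun h : G => (A.F h).obj M.pt) ⟶ ⨁ fun _ : G →* kˣ => M.pt,
        (∀ χ : G →* kˣ, finv ≫ biproduct.π (fun _ : G →* kˣ => M.pt) χ =
          biproduct.desc fun h : G =>
            (((Fintype.card G : k)⁻¹ * ((χ h : kˣ) : k)) • (M.α h).inv)) ∧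
        f ≫ finv = 𝟙 _ ∧ finv ≫ f = 𝟙 _ := by
  classical
  obtain ⟨φ⟩ := hsplit
  have := hadd
  have := hlin
  let : Fintype (G →* kˣ) := Fintype.ofFinite _
  set a : Matrix (G →* kˣ) G k := Matrix.of fun χ h => (χ h⁻¹ : k)
  set b : Matrix G (G →* kˣ) k := Matrix.of fun h χ => (Fintype.card G : k)⁻¹ * χ h
  have hab : a * b = 1 := charMatrix_mul_eq_one (natCast_card_ne_zero_of_split φ)
  have hba : b * a = 1 :=
    (Matrix.mul_eq_one_comm_of_card_eq _ _ _ (card_monoidHom_units_of_split φ)).mp hab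
  refine ⟨biproduct.smulMatrix a fun _ h => (M.α h).hom, fun χ => biproduct.ι_smulMatrix _ _ χ,
    fun g => ?_, biproduct.smulMatrix b fun h _ => (M.α h).inv,
    fun χ => biproduct.smulMatrix_π _ _ χ, ?_, ?_⟩
  · ext χ
    rw [← Category.assoc, biproduct.ι_smulMatrix,
      A.lift_comp_eq_of_cocycle (A.ι_mul_comp_of_ι_comp hαI)
        (fun g h => M.char_smul_compat χ g h) g,
      reassoc_of% (hαS g χ), ← Functor.map_comp, biproduct.ι_smulMatrix]
    rfl
  · rw [biproduct.smulMatrix_comp_smulMatrix a b fun _ h _ => (M.α h).hom_inv_id, hab,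
      biproduct.smulMatrix_one fun _ => rfl]
  · rw [biproduct.smulMatrix_comp_smulMatrix b a fun _ _ _ => rfl, hba,
      biproduct.smulMatrix_one fun h => (M.α h).inv_hom_id]
end
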